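/- arXiv:1111.1825 — 5 statements merged into one kernel-verified Lean document; each statement's English description precedes it below -/
import Mathlib

section
/- Let f:(0,∞)→(0,∞) be a Kneser function of order d≥1, i.e. f(λb)−f(λa) ≤ λ^d (f(b)−f(a)) for all 0<a≤b and λ≥1. Then the right derivative f'_+(r) exists at every r>0 and the function r ↦ f'_+(r)/r^{d−1} is non-increasing on (0,∞). -/
open Filter Set Topology

/-- A Kneser function of order `d`: a positive function on `(0,∞)` satisfying
`f(λb) − f(λa) ≤ λ^d (f(b) − f(a))` for all `0 < a ≤ b` and `λ ≥ 1`. -/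
def IsKneser (f : ℝ → ℝ) (d : ℝ) : Prop :=
  (∀ x : ℝ, 0 < x → 0 < f x) ∧
  ∀ a b lam : ℝ, 0 < a → a ≤ b → 1 ≤ lam →
    f (lam * b) - f (lam * a) ≤ lam ^ d * (f b - f a)

/-!
Rescaling `x ↦ f (r * x)` preserves the Kneser inequality, so it suffices to study `f` at `1`.
Iterating the inequality along a geometric grid `1, x, x², …` bounds `f y - f 1` by
`(f x - f 1) * ((x * y) ^ d - 1) / (x ^ d - 1)` for `1 < x ≤ y`. Hence
`ψ x = (f x - f 1) / (x ^ d - 1)` never exceeds its liminf at `1⁺`, so it converges once it is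
bounded, and then `f'₊(1) = d * lim ψ`. The bound comes from the same grid run downwards from `1`
to about `1 / e`: each of its `⌊1 / (x - 1)⌋` steps carries at least `e ^ (-d) * (f x - f 1)`, and
together they carry at most `f 1 - f (1 / e)`. Finally the Kneser inequality with `λ = s / r`,
applied to the rescaled functions, gives `s * f'₊(s) ≤ (s / r) ^ d * r * f'₊(r)`.
-/

theorem Real.pow_floor_inv_sub_one_le_exp_one {x : ℝ} (hx : 1 < x) :
    x ^ ⌊(x - 1)⁻¹⌋₊ ≤ Real.exp 1 := by
  have hx1 : 0 < x - 1 := by linarith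
  have hN : (⌊(x - 1)⁻¹⌋₊ : ℝ) * (x - 1) ≤ 1 :=
    calc (⌊(x - 1)⁻¹⌋₊ : ℝ) * (x - 1) ≤ (x - 1)⁻¹ * (x - 1) := by
          gcongr; exact Nat.floor_le (by positivity)
      _ = 1 := inv_mul_cancel₀ hx1.ne'
  calc x ^ ⌊(x - 1)⁻¹⌋₊ ≤ Real.exp (x - 1) ^ ⌊(x - 1)⁻¹⌋₊ := by
        gcongr; linarith [Real.add_one_le_exp (x - 1)]
    _ = Real.exp (⌊(x - 1)⁻¹⌋₊ * (x - 1)) := (Real.exp_nat_mul _ _).symm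
    _ ≤ Real.exp 1 := Real.exp_le_exp.2 hN

theorem Real.tendsto_slope_rpow_const_one (d : ℝ) :
    Tendsto (slope (fun x : ℝ => x ^ d) 1) (𝓝[>] 1) (𝓝 d) := by
  have h := (Real.hasDerivAt_rpow_const (p := d) (Or.inl one_ne_zero)).hasDerivWithinAt
    (s := Ioi 1)
  rw [hasDerivWithinAt_iff_tendsto_slope' self_notMem_Ioi] at h
  simpa using h

theorem hasDerivWithinAt_Ioi_one_comp_const_mul_iff {f : ℝ → ℝ} {r D : ℝ} (hr : 0 < r) :
    HasDerivWithinAt (fun x => f (r * x)) (r * D) (Ioi 1) 1 ↔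
      HasDerivWithinAt f D (Ioi r) r := by
  rw [← smul_eq_mul r D, hasDerivWithinAt_comp_mul_left_smul_iff, LinearOrderedField.smul_Ioi hr,
    mul_one]

theorem HasDerivWithinAt.le_of_sub_le_sub {g h : ℝ → ℝ} {a g' h' : ℝ}
    (hg : HasDerivWithinAt g g' (Ioi a) a) (hh : HasDerivWithinAt h h' (Ioi a) a)
    (hle : ∀ x, a < x → g x - g a ≤ h x - h a) : g' ≤ h' := by
  rw [hasDerivWithinAt_iff_tendsto_slope' self_notMem_Ioi] at hg hh
  refine le_of_tendsto_of_tendsto hg hh (eventually_nhdsWithin_of_forall fun x (hx : a < x) => ?_)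
  simp only [slope_def_field]
  exact div_le_div_of_nonneg_right (hle x hx) (by linarith)

namespace IsKneser

variable {f : ℝ → ℝ} {d : ℝ}

theorem comp_const_mul (hf : IsKneser f d) {r : ℝ} (hr : 0 < r) :
    IsKneser (fun x => f (r * x)) d := by
  refine ⟨fun x hx => hf.1 _ (mul_pos hr hx), fun a b lam ha hab hlam => ?_⟩
  have := hf.2 (r * a) (r * b) lam (mul_pos hr ha) (by gcongr) hlam
  simpa only [mul_left_comm lam r] using this

theorem sub_le_rpow_mul_sub (hf : IsKneser f d) {a μ : ℝ} (ha : 0 < a) (hμ : 1 ≤ μ)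
    (j k : ℕ) :
    f (a * μ ^ (j + k + 1)) - f (a * μ ^ (j + k)) ≤
      (μ ^ j) ^ d * (f (a * μ ^ (k + 1)) - f (a * μ ^ k)) := by
  have hμk : a * μ ^ k ≤ a * μ ^ (k + 1) :=
    mul_le_mul_of_nonneg_left (pow_le_pow_right₀ hμ k.le_succ) ha.le
  convert hf.2 _ _ (μ ^ j) (by positivity) hμk (one_le_pow₀ hμ) using 3 <;> ring

theorem sub_le_mul_geom_sum (hf : IsKneser f d) {a μ : ℝ} (ha : 0 < a) (hμ : 1 ≤ μ)
    (N : ℕ) :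
    f (a * μ ^ N) - f a ≤ (f (a * μ) - f a) * ∑ k ∈ Finset.range N, (μ ^ d) ^ k := by
  calc f (a * μ ^ N) - f a = ∑ k ∈ Finset.range N, (f (a * μ ^ (k + 1)) - f (a * μ ^ k)) := by
        rw [Finset.sum_range_sub (fun k => f (a * μ ^ k))]; simp
    _ ≤ ∑ k ∈ Finset.range N, (f (a * μ) - f a) * (μ ^ d) ^ k := by
        refine Finset.sum_le_sum fun k _ => ?_
        rw [mul_comm (f (a * μ) - f a), Real.rpow_pow_comm (by linarith)]
        simpa only [add_zero, pow_zero, mul_one, zero_add, pow_one] using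
          hf.sub_le_rpow_mul_sub ha hμ k 0
    _ = _ := (Finset.mul_sum ..).symm

theorem monotoneOn (hf : IsKneser f d) (hd : 0 ≤ d) : MonotoneOn f (Ioi 0) := by
  intro x (hx : 0 < x) y _ hxy
  by_contra! hlt
  have hμ : 1 ≤ y / x := (one_le_div hx).2 hxy
  have hxμ : x * (y / x) = y := by field_simp
  -- every step of the geometric grid `x (y/x)^k` drops by at least `f x - f y`
  have hdrop (N : ℕ) : f (x * (y / x) ^ N) - f x ≤ N * (f y - f x) := by
    have hsum : (N : ℝ) ≤ ∑ k ∈ Finset.range N, ((y / x) ^ d) ^ k := by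
      simpa using Finset.card_nsmul_le_sum (Finset.range N) _ 1
        fun k _ => one_le_pow₀ (Real.one_le_rpow hμ hd)
    have := hf.sub_le_mul_geom_sum hx hμ N
    rw [hxμ] at this
    nlinarith
  obtain ⟨N, hN⟩ := exists_nat_gt (f x / (f x - f y))
  have hpos := hf.1 (x * (y / x) ^ N) (by positivity)
  have := hdrop N
  rw [div_lt_iff₀ (by linarith)] at hN
  nlinarith

theorem sub_one_le_div_mul (hf : IsKneser f d) (hd : 0 < d) {x y : ℝ} (hx : 1 < x)
    (hxy : x ≤ y) :
    f y - f 1 ≤ (f x - f 1) / (x ^ d - 1) * ((x * y) ^ d - 1) := by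
  obtain ⟨n, hn, hn'⟩ := exists_nat_pow_near (hx.le.trans hxy) hx
  have hxd : 0 < x ^ d - 1 := sub_pos.2 (Real.one_lt_rpow hx hd)
  have hmono := hf.monotoneOn hd.le
  have hfx : 0 ≤ f x - f 1 := sub_nonneg.2 (hmono (mem_Ioi.2 one_pos) (by simp; linarith) hx.le)
  calc f y - f 1 ≤ f (x ^ (n + 1)) - f 1 := by
        gcongr
        exact hmono (by simp; linarith) (by simp; positivity) hn'.le
    _ ≤ (f x - f 1) * ∑ k ∈ Finset.range (n + 1), (x ^ d) ^ k := by
        simpa using hf.sub_le_mul_geom_sum one_pos hx.le (n + 1)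
    _ = (f x - f 1) / (x ^ d - 1) * ((x ^ (n + 1)) ^ d - 1) := by
        rw [geom_sum_eq (by linarith), Real.rpow_pow_comm (by linarith)]
        ring
    _ ≤ (f x - f 1) / (x ^ d - 1) * ((x * y) ^ d - 1) := by
        gcongr
        calc x ^ (n + 1) = x * x ^ n := pow_succ' x n
          _ ≤ x * y := by gcongr

theorem nat_mul_sub_le (hf : IsKneser f d) (hd : 0 ≤ d) {a μ : ℝ} (ha : 0 < a) (hμ : 1 ≤ μ)
    (N : ℕ) :
    N * (f (a * μ ^ (N + 1)) - f (a * μ ^ N)) ≤ (μ ^ N) ^ d * (f (a * μ ^ N) - f a) := by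
  have hmono := hf.monotoneOn hd
  calc N * (f (a * μ ^ (N + 1)) - f (a * μ ^ N))
      = ∑ k ∈ Finset.range N, (f (a * μ ^ (N + 1)) - f (a * μ ^ N)) := by
        rw [Finset.sum_const, Finset.card_range, nsmul_eq_mul]
    _ ≤ ∑ k ∈ Finset.range N, (μ ^ N) ^ d * (f (a * μ ^ (k + 1)) - f (a * μ ^ k)) := by
        refine Finset.sum_le_sum fun k hk => ?_
        obtain ⟨j, rfl⟩ : ∃ j, N = j + k := ⟨N - k, by simp at hk; omega⟩
        have hinc : 0 ≤ f (a * μ ^ (k + 1)) - f (a * μ ^ k) :=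
          sub_nonneg.2 (hmono (by simp; positivity) (by simp; positivity)
            (mul_le_mul_of_nonneg_left (pow_le_pow_right₀ hμ k.le_succ) ha.le))
        calc _ ≤ (μ ^ j) ^ d * (f (a * μ ^ (k + 1)) - f (a * μ ^ k)) :=
              hf.sub_le_rpow_mul_sub ha hμ j k
          _ ≤ _ := by gcongr; exact Nat.le_add_right j k
    _ = (μ ^ N) ^ d * (f (a * μ ^ N) - f a) := by
        rw [← Finset.mul_sum, Finset.sum_range_sub (fun k => f (a * μ ^ k))]
        simp

theorem slope_one_le (hf : IsKneser f d) (hd : 0 ≤ d) {x : ℝ} (hx : 1 < x) (hx' : x ≤ 3 / 2) :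
    slope f 1 x ≤ 2 * Real.exp d * (f 1 - f (Real.exp (-1))) := by
  set N := ⌊(x - 1)⁻¹⌋₊
  have hx1 : 0 < x - 1 := by linarith
  have hNx : 1 ≤ 2 * (x - 1) * N := by
    have := Nat.sub_one_lt_floor (x - 1)⁻¹
    have := mul_inv_cancel₀ hx1.ne'
    nlinarith
  have hxN : x ^ N ≤ Real.exp 1 := Real.pow_floor_inv_sub_one_le_exp_one hx
  have hpos : 0 < x ^ N := by positivity
  have hmono := hf.monotoneOn hd
  -- telescoping over the grid `x ^ k / x ^ N`, `k ≤ N`, which spans `[1 / e, 1]`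
  have key := hf.nat_mul_sub_le hd (inv_pos.2 hpos) hx.le N
  rw [pow_succ, ← mul_assoc, inv_mul_cancel₀ hpos.ne', one_mul] at key
  have hfx : 0 ≤ f x - f 1 := sub_nonneg.2 (hmono (mem_Ioi.2 one_pos) (by simp; linarith) hx.le)
  have hfa : f (Real.exp (-1)) ≤ f (x ^ N)⁻¹ := by
    refine hmono (by simp; positivity) (by simp; positivity) ?_
    rw [Real.exp_neg]
    exact inv_anti₀ hpos hxN
  have hfa1 : 0 ≤ f 1 - f (x ^ N)⁻¹ :=
    sub_nonneg.2 (hmono (by simp; positivity) (mem_Ioi.2 one_pos)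
      (inv_le_one_of_one_le₀ (one_le_pow₀ hx.le)))
  have hpow : (x ^ N) ^ d ≤ Real.exp d :=
    (Real.rpow_le_rpow hpos.le hxN hd).trans_eq (Real.exp_one_rpow d)
  rw [slope_def_field, div_le_iff₀ hx1]
  calc f x - f 1 ≤ 2 * (x - 1) * N * (f x - f 1) := le_mul_of_one_le_left hfx hNx
    _ ≤ 2 * (x - 1) * ((x ^ N) ^ d * (f 1 - f (x ^ N)⁻¹)) := by
        rw [mul_assoc]; gcongr
    _ ≤ 2 * (x - 1) * (Real.exp d * (f 1 - f (Real.exp (-1)))) := by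
        gcongr
    _ = 2 * Real.exp d * (f 1 - f (Real.exp (-1))) * (x - 1) := by ring

theorem eventually_div_rpow_sub_one_le (hf : IsKneser f d) (hd : 0 < d) :
    ∃ C, ∀ᶠ x in 𝓝[>] 1, (f x - f 1) / (x ^ d - 1) ≤ C := by
  set C := 2 * Real.exp d * (f 1 - f (Real.exp (-1)))
  have hslope : ∀ᶠ x in 𝓝[>] 1, slope f 1 x ≤ C := by
    filter_upwards [Ioc_mem_nhdsGT (show (1 : ℝ) < 3 / 2 by norm_num)] with x hx
    exact hf.slope_one_le hd.le hx.1 hx.2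
  have hpow : ∀ᶠ x in 𝓝[>] 1, d / 2 ≤ slope (fun x : ℝ => x ^ d) 1 x :=
    (Real.tendsto_slope_rpow_const_one d).eventually (eventually_ge_nhds (by linarith))
  refine ⟨C / (d / 2), ?_⟩
  filter_upwards [hslope, hpow, self_mem_nhdsWithin] with x hxC hxd (hx : 1 < x)
  have hfx : 0 ≤ slope f 1 x := by
    rw [slope_def_field]
    exact div_nonneg (sub_nonneg.2 (hf.monotoneOn hd.le (mem_Ioi.2 one_pos)
      (mem_Ioi.2 (by linarith)) hx.le)) (by linarith)
  calc (f x - f 1) / (x ^ d - 1) = slope f 1 x / slope (fun x : ℝ => x ^ d) 1 x := by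
        simp only [slope_def_field, Real.one_rpow]
        rw [div_div_div_cancel_right₀ (by linarith)]
    _ ≤ C / (d / 2) := div_le_div₀ (hfx.trans hxC) hxC (by linarith) hxd

theorem exists_tendsto_div_rpow_sub_one (hf : IsKneser f d) (hd : 0 < d) :
    ∃ L, Tendsto (fun x => (f x - f 1) / (x ^ d - 1)) (𝓝[>] 1) (𝓝 L) := by
  set ψ := fun x => (f x - f 1) / (x ^ d - 1)
  have hrpow {x : ℝ} (hx : 1 < x) : 0 < x ^ d - 1 := sub_pos.2 (Real.one_lt_rpow hx hd)
  have hψ0 : ∀ᶠ x in 𝓝[>] 1, 0 ≤ ψ x := eventually_nhdsWithin_of_forall fun x (hx : 1 < x) =>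
    div_nonneg (sub_nonneg.2 (hf.monotoneOn hd.le (mem_Ioi.2 one_pos) (mem_Ioi.2 (by linarith))
      hx.le)) (hrpow hx).le
  obtain ⟨C, hC⟩ := hf.eventually_div_rpow_sub_one_le hd
  have hbdd : IsBoundedUnder (· ≤ ·) (𝓝[>] 1) ψ := isBoundedUnder_of_eventually_le hC
  have hbdd' : IsBoundedUnder (· ≥ ·) (𝓝[>] 1) ψ := isBoundedUnder_of_eventually_ge hψ0
  have hle : ∀ y, 1 < y → ψ y ≤ liminf ψ (𝓝[>] 1) := by
    intro y hy
    have hc : Tendsto (fun x => ψ y * ((y ^ d - 1) / ((x * y) ^ d - 1))) (𝓝[>] 1)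
        (𝓝 (ψ y * ((y ^ d - 1) / ((1 * y) ^ d - 1)))) := by
      refine (tendsto_const_nhds.mul (tendsto_const_nhds.div ?_ ?_)).mono_left
        nhdsWithin_le_nhds
      · exact ((continuous_id.mul continuous_const).continuousAt.rpow_const
          (Or.inr hd.le)).sub continuousAt_const
      · simpa using (hrpow hy).ne'
    rw [one_mul, div_self (hrpow hy).ne', mul_one] at hc
    rw [← hc.liminf_eq]
    refine liminf_le_liminf ?_ hc.isBoundedUnder_ge hbdd.isCoboundedUnder_ge
    filter_upwards [Ioc_mem_nhdsGT hy] with x ⟨hx, hxy⟩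
    have hxy' : 0 < (x * y) ^ d - 1 := hrpow (one_lt_mul_of_lt_of_le hx hy.le)
    rw [← mul_div_assoc, div_le_iff₀ hxy', div_mul_cancel₀ _ (hrpow hy).ne']
    exact hf.sub_one_le_div_mul hd hx hxy
  exact ⟨_, tendsto_of_le_liminf_of_limsup_le le_rfl
    (limsup_le_of_le hbdd'.isCoboundedUnder_le (eventually_nhdsWithin_of_forall hle)) hbdd hbdd'⟩

theorem exists_hasDerivWithinAt_Ioi_one (hf : IsKneser f d) (hd : 0 < d) :
    ∃ D, HasDerivWithinAt f D (Ioi 1) 1 := by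
  obtain ⟨L, hL⟩ := hf.exists_tendsto_div_rpow_sub_one hd
  refine ⟨L * d, (hasDerivWithinAt_iff_tendsto_slope' self_notMem_Ioi).2 ?_⟩
  refine (hL.mul (Real.tendsto_slope_rpow_const_one d)).congr' ?_
  filter_upwards [self_mem_nhdsWithin] with x (hx : 1 < x)
  have : x ^ d - 1 ≠ 0 := (sub_pos.2 (Real.one_lt_rpow hx hd)).ne'
  simp only [slope_def_field, Real.one_rpow]
  field_simp

theorem div_rpow_le_of_hasDerivWithinAt (hf : IsKneser f d) {r s Dr Ds : ℝ} (hr : 0 < r) (hrs : r ≤ s) (hDr : HasDerivWithinAt f Dr (Ioi r) r)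
    (hDs : HasDerivWithinAt f Ds (Ioi s) s) :
    Ds / s ^ (d - 1) ≤ Dr / r ^ (d - 1) := by
  have hs : 0 < s := hr.trans_le hrs
  have hgr := (hasDerivWithinAt_Ioi_one_comp_const_mul_iff hr).2 hDr
  have hgs := (hasDerivWithinAt_Ioi_one_comp_const_mul_iff hs).2 hDs
  have hcmp : s * Ds ≤ (s / r) ^ d * (r * Dr) := by
    refine hgs.le_of_sub_le_sub (hgr.const_mul _) fun x (hx : 1 < x) => ?_
    have := hf.2 r (r * x) (s / r) hr (le_mul_of_one_le_right hr.le hx.le)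
      ((one_le_div hr).2 hrs)
    rw [div_mul_cancel₀ _ hr.ne', ← mul_assoc, div_mul_cancel₀ _ hr.ne'] at this
    simpa only [mul_one, mul_sub] using this
  have hsd : 0 < s ^ d := by positivity
  have hrd : 0 < r ^ d := by positivity
  rw [Real.div_rpow hs.le hr.le, div_mul_eq_mul_div, le_div_iff₀ hrd] at hcmp
  rw [Real.rpow_sub_one hs.ne', Real.rpow_sub_one hr.ne', div_div_eq_mul_div,
    div_div_eq_mul_div, div_le_div_iff₀ hsd hrd]
  linarith

end IsKneser

theorem kneser_rightDeriv_exists_and_antitone (f : ℝ → ℝ) (d : ℝ) (hd : 1 ≤ d)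
    (hf : IsKneser f d) :
    (∀ r : ℝ, 0 < r → ∃ D : ℝ, HasDerivWithinAt f D (Set.Ioi r) r) ∧
    AntitoneOn (fun r => derivWithin f (Set.Ioi r) r / r ^ (d - 1)) (Set.Ioi 0) := by
  have hderiv (r : ℝ) (hr : 0 < r) : HasDerivWithinAt f (derivWithin f (Ioi r) r) (Ioi r) r := by
    obtain ⟨D, hD⟩ := (hf.comp_const_mul hr).exists_hasDerivWithinAt_Ioi_one (by linarith)
    rw [← mul_div_cancel₀ D hr.ne', hasDerivWithinAt_Ioi_one_comp_const_mul_iff hr] at hD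
    exact hD.differentiableWithinAt.hasDerivWithinAt
  exact ⟨fun r hr => ⟨_, hderiv r hr⟩, fun r hr s hs hrs =>
    hf.div_rpow_le_of_hasDerivWithinAt hr hrs (hderiv r hr) (hderiv s hs)⟩
end

section
/- Let f be a Kneser function of order d≥1 and s∈(0,∞). If 0 < liminf_{r→0} f(r)/r^s ≤ limsup_{r→0} f(r)/r^s < ∞, then liminf_{r→0} f'_+(r)/r^{s−1} > 0. -/
open Filter Set Topology

/-!
Rescaling the Kneser inequality compares increments of `f` of equal length at different places:
`f q - f (q - k) ≤ (q / p) ^ d * (f p - f (p - k))` for `k < p ≤ q`. Chaining it controls the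
difference quotients `(f (x + h) - f x) / h`. They are bounded, since about `x / h` disjoint
increments to the left of `x` each dominate `3 ^ (-d)` times the one at `x` and sum to at most
`f x`. And an increment of length `H` is at most `(1 + o(1))` times the sum of the increments of
length `h ≪ H` tiling it, so `limsup ≤ liminf`: `f` has a right derivative `f'₊ x`, and
`f (x + H) - f x ≤ H * ((x + H) / x) ^ d * f'₊ x`. If `c r ^ s ≤ f r ≤ C r ^ s` near `0`, taking
`x + H = λ x` with `c λ ^ s > C` gives `f'₊ x ≥ (c λ ^ s - C) / ((λ - 1) λ ^ d) * x ^ (s - 1)`.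
-/

theorem sub_le_natCast_mul_of_succ_sub_le {g : ℕ → ℝ} {B : ℝ} {n : ℕ}
    (h : ∀ i < n, g (i + 1) - g i ≤ B) : g n - g 0 ≤ n * B := by
  induction n with
  | zero => simp
  | succ n ih =>
    have := ih fun i hi => h i (by omega)
    push_cast
    linarith [h n n.lt_succ_self]

namespace IsKneser

variable {f : ℝ → ℝ} {d : ℝ}

theorem sub_nonneg_of_le (hf : IsKneser f d) (hd : 0 ≤ d) {a b : ℝ} (ha : 0 < a) (hab : a ≤ b) :
    0 ≤ f b - f a :=
  sub_nonneg.2 (hf.monotoneOn hd ha (ha.trans_le hab) hab)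

theorem sub_le_rpow_div_mul_sub (hf : IsKneser f d) (hd : 0 ≤ d) {p q k : ℝ} (hk : 0 ≤ k)
    (hkp : k < p) (hpq : p ≤ q) : f q - f (q - k) ≤ (q / p) ^ d * (f p - f (p - k)) := by
  have hp : 0 < p := hk.trans_lt hkp
  have hlam : 1 ≤ q / p := (one_le_div hp).2 hpq
  have hK := hf.2 (p - k) p (q / p) (by linarith) (by linarith) hlam
  rw [div_mul_cancel₀ q hp.ne'] at hK
  have hlow : f (q / p * (p - k)) ≤ f (q - k) := by
    refine hf.monotoneOn hd (mul_pos (div_pos (hp.trans_le hpq) hp) (sub_pos.2 hkp))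
      (show 0 < q - k by linarith) ?_
    rw [mul_sub, div_mul_cancel₀ q hp.ne']
    linarith [le_mul_of_one_le_left hk hlam]
  linarith

theorem sub_le_natCast_mul_rpow_mul_sub (hf : IsKneser f d) (hd : 0 ≤ d) {x h : ℝ} (hx : 0 < x)
    (hh : 0 ≤ h) (n : ℕ) :
    f (x + n * h) - f x ≤ n * (((x + n * h) / x) ^ d * (f (x + h) - f x)) := by
  have piece (i : ℕ) (hi : i < n) :
      f (x + (i + 1 : ℕ) * h) - f (x + i * h) ≤ ((x + n * h) / x) ^ d * (f (x + h) - f x) := by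
    have hi : (i : ℝ) + 1 ≤ n := by exact_mod_cast hi
    have hK := hf.sub_le_rpow_div_mul_sub hd (p := x + h) (q := x + (i + 1) * h) hh (by linarith)
      (by nlinarith)
    rw [show x + (i + 1) * h - h = x + i * h by ring, add_sub_cancel_right] at hK
    push_cast
    refine hK.trans (mul_le_mul_of_nonneg_right ?_ (hf.sub_nonneg_of_le hd hx (by linarith)))
    refine Real.rpow_le_rpow (by positivity) ?_ hd
    rw [div_le_div_iff₀ (by linarith) hx]
    nlinarith [mul_nonneg (mul_nonneg (sub_nonneg.2 hi) hh) hx.le, mul_nonneg hh hx.le,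
      mul_nonneg (mul_nonneg (Nat.cast_nonneg n : (0 : ℝ) ≤ n) hh) hh]
  simpa using sub_le_natCast_mul_of_succ_sub_le (g := fun i => f (x + i * h)) piece

theorem natCast_mul_sub_le_rpow_mul_sub (hf : IsKneser f d) (hd : 0 ≤ d) {x h : ℝ} (hh : 0 ≤ h)
    (m : ℕ) (hm : m * h < x) :
    m * (f (x + h) - f x) ≤ ((x + h) / (x - m * h)) ^ d * (f x - f (x - m * h)) := by
  set R := ((x + h) / (x - m * h)) ^ d
  have piece (j : ℕ) (hj : j < m) :
      R * f (x - (j + 1 : ℕ) * h) - R * f (x - j * h) ≤ -(f (x + h) - f x) := by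
    have hj : ((j : ℝ) + 1) * h ≤ m * h := mul_le_mul_of_nonneg_right (by exact_mod_cast hj) hh
    have hj0 : 0 ≤ (j : ℝ) * h := by positivity
    have hK := hf.sub_le_rpow_div_mul_sub hd (p := x - j * h) (q := x + h) hh (by linarith)
      (by linarith)
    rw [add_sub_cancel_right] at hK
    have hR : ((x + h) / (x - j * h)) ^ d ≤ R := by
      refine Real.rpow_le_rpow (div_nonneg (by linarith) (by linarith)) ?_ hd
      exact div_le_div_of_nonneg_left (by linarith) (by linarith) (by linarith)
    have := mul_le_mul_of_nonneg_right hR (hf.sub_nonneg_of_le hd (by linarith) (by linarith) :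
      0 ≤ f (x - j * h) - f (x - j * h - h))
    push_cast
    rw [show x - (j + 1) * h = x - j * h - h by ring]
    linarith
  have := sub_le_natCast_mul_of_succ_sub_le (g := fun j => R * f (x - j * h)) piece
  simp only [CharP.cast_eq_zero, zero_mul, sub_zero] at this
  linarith

theorem slope_le_of_four_mul_le (hf : IsKneser f d) (hd : 0 ≤ d) {x h : ℝ} (hh : 0 < h)
    (hhx : 4 * h ≤ x) :
    (f (x + h) - f x) / h ≤ 4 * 3 ^ d * (f x / x) := by
  have hx : 0 < x := by linarith
  set m := ⌊x / (2 * h)⌋₊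
  have hm_le : m * h ≤ x / 2 := by
    have := Nat.floor_le (show 0 ≤ x / (2 * h) by positivity)
    rw [le_div_iff₀ (by positivity)] at this
    linarith
  have hm_ge : x ≤ 4 * h * m := by
    have := Nat.lt_floor_add_one (x / (2 * h))
    rw [div_lt_iff₀ (by positivity)] at this
    linarith
  have hchain := hf.natCast_mul_sub_le_rpow_mul_sub hd hh.le m (by linarith)
  have hratio : ((x + h) / (x - m * h)) ^ d ≤ 3 ^ d :=
    Real.rpow_le_rpow (div_nonneg (by linarith) (by linarith))
      ((div_le_iff₀ (by linarith)).2 (by linarith)) hd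
  have hdrop : f x - f (x - m * h) ≤ f x := by linarith [hf.1 (x - m * h) (by linarith)]
  have hinc := hf.sub_nonneg_of_le hd hx (le_add_of_nonneg_right hh.le)
  have hbound : m * (f (x + h) - f x) ≤ 3 ^ d * f x :=
    hchain.trans (mul_le_mul hratio hdrop (hf.sub_nonneg_of_le hd (by linarith) (by linarith))
      (by positivity))
  rw [div_le_iff₀ hh, mul_div_assoc', div_mul_eq_mul_div, le_div_iff₀ hx]
  nlinarith [mul_le_mul_of_nonneg_right hm_ge hinc]

theorem isBoundedUnder_le_slope (hf : IsKneser f d) (hd : 0 ≤ d) {x : ℝ} (hx : 0 < x) :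
    IsBoundedUnder (· ≤ ·) (𝓝[>] 0) fun h => (f (x + h) - f x) / h := by
  refine isBoundedUnder_of_eventually_le (a := 4 * 3 ^ d * (f x / x)) ?_
  filter_upwards [Ioo_mem_nhdsGT (show (0 : ℝ) < x / 4 by positivity)] with h hh
  exact hf.slope_le_of_four_mul_le hd hh.1 (by linarith [hh.2])

theorem sub_le_mul_slope (hf : IsKneser f d) (hd : 0 ≤ d) {x h H : ℝ} (hx : 0 < x) (hh : 0 < h)
    (hH : 0 ≤ H) :
    f (x + H) - f x ≤ (H + h) * ((x + H + h) / x) ^ d * ((f (x + h) - f x) / h) := by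
  set n := ⌈H / h⌉₊
  have hn_ge : H ≤ n * h := (div_le_iff₀ hh).1 (Nat.le_ceil _)
  have hn_le : n * h ≤ H + h := by
    have := mul_lt_mul_of_pos_right (Nat.ceil_lt_add_one (div_nonneg hH hh.le)) hh
    rw [add_mul, div_mul_cancel₀ H hh.ne', one_mul] at this
    exact this.le
  have hinc := hf.sub_nonneg_of_le hd hx (le_add_of_nonneg_right hh.le)
  calc f (x + H) - f x ≤ f (x + n * h) - f x := by
        gcongr
        exact hf.monotoneOn hd (show 0 < x + H by linarith) (show 0 < x + n * h by positivity)
          (by linarith)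
    _ ≤ n * (((x + n * h) / x) ^ d * (f (x + h) - f x)) :=
        hf.sub_le_natCast_mul_rpow_mul_sub hd hx hh.le n
    _ = n * h * ((x + n * h) / x) ^ d * ((f (x + h) - f x) / h) := by
        field_simp
    _ ≤ (H + h) * ((x + H + h) / x) ^ d * ((f (x + h) - f x) / h) := by
        have := div_nonneg hinc hh.le
        gcongr ?_ * (?_ / x) ^ d * _
        linarith

theorem sub_le_mul_liminf_slope (hf : IsKneser f d) (hd : 0 ≤ d) {x H : ℝ} (hx : 0 < x)
    (hH : 0 ≤ H) :
    f (x + H) - f x ≤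
      H * ((x + H) / x) ^ d * liminf (fun h => (f (x + h) - f x) / h) (𝓝[>] 0) := by
  set L := liminf (fun h => (f (x + h) - f x) / h) (𝓝[>] 0)
  set P := H * ((x + H) / x) ^ d
  have hfactor : Tendsto (fun h => (H + h) * ((x + H + h) / x) ^ d) (𝓝[>] 0) (𝓝 P) := by
    have : Continuous fun h => (H + h) * ((x + H + h) / x) ^ d := by
      fun_prop (disch := exact hd)
    simpa [P] using ((this.tendsto 0).mono_left nhdsWithin_le_nhds)
  have happrox (ε : ℝ) (hε : 0 < ε) : f (x + H) - f x ≤ (P + ε) * (L + ε) := by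
    obtain ⟨h, hslope, hfac, hh⟩ :=
      ((frequently_lt_of_liminf_lt (hf.isBoundedUnder_le_slope hd hx).isCoboundedUnder_ge
        (lt_add_of_pos_right L hε)).and_eventually
        ((hfactor.eventually_lt_const (lt_add_of_pos_right P hε)).and self_mem_nhdsWithin)).exists
    have hh : 0 < h := hh
    calc f (x + H) - f x ≤ (H + h) * ((x + H + h) / x) ^ d * ((f (x + h) - f x) / h) :=
          hf.sub_le_mul_slope hd hx hh hH
      _ ≤ (P + ε) * (L + ε) :=
          mul_le_mul hfac.le hslope.le
            (div_nonneg (hf.sub_nonneg_of_le hd hx (by linarith)) hh.le) (by positivity)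
  have hlim : Tendsto (fun ε => (P + ε) * (L + ε)) (𝓝[>] 0) (𝓝 (P * L)) := by
    have : Continuous fun ε : ℝ => (P + ε) * (L + ε) := by fun_prop
    simpa using ((this.tendsto 0).mono_left nhdsWithin_le_nhds)
  exact ge_of_tendsto hlim (eventually_nhdsWithin_of_forall happrox)

theorem tendsto_slope_liminf (hf : IsKneser f d) (hd : 0 ≤ d) {x : ℝ} (hx : 0 < x) :
    Tendsto (fun h => (f (x + h) - f x) / h) (𝓝[>] 0)
      (𝓝 (liminf (fun h => (f (x + h) - f x) / h) (𝓝[>] 0))) := by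
  set u := fun h => (f (x + h) - f x) / h
  set L := liminf u (𝓝[>] 0)
  have hnonneg : ∀ᶠ h in 𝓝[>] 0, 0 ≤ u h :=
    eventually_nhdsWithin_of_forall fun h (hh : 0 < h) =>
      div_nonneg (hf.sub_nonneg_of_le hd hx (by linarith)) hh.le
  have hbound : ∀ᶠ H in 𝓝[>] 0, u H ≤ ((x + H) / x) ^ d * L :=
    eventually_nhdsWithin_of_forall fun H (hH : 0 < H) => by
      rw [div_le_iff₀ hH, mul_right_comm, mul_comm _ H]
      exact hf.sub_le_mul_liminf_slope hd hx hH.le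
  have hfactor : Tendsto (fun H => ((x + H) / x) ^ d * L) (𝓝[>] 0) (𝓝 L) := by
    have : Continuous fun H => ((x + H) / x) ^ d * L := by fun_prop (disch := exact hd)
    simpa [div_self hx.ne'] using ((this.tendsto 0).mono_left nhdsWithin_le_nhds)
  have hlimsup : limsup u (𝓝[>] 0) ≤ L :=
    (limsup_le_limsup hbound (isBoundedUnder_of_eventually_ge hnonneg).isCoboundedUnder_le
      hfactor.isBoundedUnder_le).trans_eq hfactor.limsup_eq
  exact tendsto_of_le_liminf_of_limsup_le le_rfl hlimsup (hf.isBoundedUnder_le_slope hd hx)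
    (isBoundedUnder_of_eventually_ge hnonneg)

theorem hasDerivWithinAt_Ioi (hf : IsKneser f d) (hd : 0 ≤ d) {x : ℝ} (hx : 0 < x) :
    HasDerivWithinAt f (liminf (fun h => (f (x + h) - f x) / h) (𝓝[>] 0)) (Ioi x) x := by
  rw [hasDerivWithinAt_iff_tendsto_slope' self_notMem_Ioi]
  have hshift : Tendsto (fun y => y - x) (𝓝[>] x) (𝓝[>] 0) :=
    tendsto_nhdsWithin_iff.2
      ⟨((continuous_sub_right x).tendsto' x 0 (sub_self x)).mono_left nhdsWithin_le_nhds,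
        eventually_nhdsWithin_of_forall fun y hy => show 0 < y - x from sub_pos.2 hy⟩
  refine ((hf.tendsto_slope_liminf hd hx).comp hshift).congr fun y => ?_
  simp [slope_def_field]

theorem sub_le_mul_derivWithin (hf : IsKneser f d) (hd : 0 ≤ d) {x H : ℝ} (hx : 0 < x)
    (hH : 0 ≤ H) : f (x + H) - f x ≤ H * ((x + H) / x) ^ d * derivWithin f (Ioi x) x := by
  rw [(hf.hasDerivWithinAt_Ioi hd hx).derivWithin (uniqueDiffWithinAt_Ioi x)]
  exact hf.sub_le_mul_liminf_slope hd hx hH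

theorem exists_pos_eventually_le_derivWithin_div_rpow (hf : IsKneser f d) (hd : 0 ≤ d)
    {s c C : ℝ} (hs : 0 < s) (hc : 0 < c) (hlow : ∀ᶠ r in 𝓝[>] 0, c * r ^ s ≤ f r)
    (hup : ∀ᶠ r in 𝓝[>] 0, f r ≤ C * r ^ s) :
    ∃ c₁ > 0, ∀ᶠ r in 𝓝[>] 0, c₁ ≤ derivWithin f (Ioi r) r / r ^ (s - 1) := by
  obtain ⟨lam, hlamC, hlam⟩ : ∃ lam : ℝ, C / c < lam ^ s ∧ 1 < lam :=
    (((tendsto_rpow_atTop hs).eventually_gt_atTop (C / c)).and (eventually_gt_atTop 1)).exists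
  have hgap : 0 < c * lam ^ s - C := by
    rw [div_lt_iff₀' hc] at hlamC
    linarith
  have hscale : 0 < (lam - 1) * lam ^ d := mul_pos (sub_pos.2 hlam) (by positivity)
  refine ⟨(c * lam ^ s - C) / ((lam - 1) * lam ^ d), div_pos hgap hscale, ?_⟩
  filter_upwards [eventually_nhdsGT_zero_mul_left (zero_lt_one.trans hlam) hlow, hup,
    self_mem_nhdsWithin] with r hlowr hupr (hr : 0 < r)
  have hderiv := hf.sub_le_mul_derivWithin hd hr (H := (lam - 1) * r) (by nlinarith)
  rw [show r + (lam - 1) * r = lam * r by ring, mul_div_cancel_right₀ lam hr.ne'] at hderiv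
  rw [Real.mul_rpow (by linarith) hr.le] at hlowr
  have hrs : 0 < r ^ s := Real.rpow_pos_of_pos hr s
  rw [Real.rpow_sub_one hr.ne', div_div_eq_mul_div, le_div_iff₀ hrs, div_mul_eq_mul_div,
    div_le_iff₀ hscale]
  nlinarith

end IsKneser

theorem kneser_liminf_rightDeriv_pos (f : ℝ → ℝ) (d s : ℝ) (hd : 1 ≤ d)
    (hf : IsKneser f d) (hs : 0 < s)
    (h1 : 0 < Filter.liminf (fun r : ℝ => ((f r / r ^ s : ℝ) : EReal)) (𝓝[>] (0 : ℝ)))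
    (h2 : Filter.limsup (fun r : ℝ => ((f r / r ^ s : ℝ) : EReal)) (𝓝[>] (0 : ℝ)) < ⊤) :
    0 < Filter.liminf
        (fun r : ℝ => ((derivWithin f (Set.Ioi r) r / r ^ (s - 1) : ℝ) : EReal))
        (𝓝[>] (0 : ℝ)) := by
  obtain ⟨c, hc0, hc⟩ := EReal.exists_between_coe_real h1
  obtain ⟨C, hC, -⟩ := EReal.exists_between_coe_real h2
  have hlow : ∀ᶠ r in 𝓝[>] 0, c * r ^ s ≤ f r := by
    filter_upwards [eventually_lt_of_lt_liminf hc, self_mem_nhdsWithin] with r hr (hr0 : 0 < r)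
    rw [EReal.coe_lt_coe_iff, lt_div_iff₀ (Real.rpow_pos_of_pos hr0 s)] at hr
    exact hr.le
  have hup : ∀ᶠ r in 𝓝[>] 0, f r ≤ C * r ^ s := by
    filter_upwards [eventually_lt_of_limsup_lt hC, self_mem_nhdsWithin] with r hr (hr0 : 0 < r)
    rw [EReal.coe_lt_coe_iff, div_lt_iff₀ (Real.rpow_pos_of_pos hr0 s)] at hr
    exact hr.le
  obtain ⟨c₁, hc₁, hderiv⟩ := hf.exists_pos_eventually_le_derivWithin_div_rpow (by linarith) hs
    (EReal.coe_pos.1 hc0) hlow hup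
  exact (EReal.coe_pos.2 hc₁).trans_le
    (le_liminf_of_le (by isBoundedDefault) (hderiv.mono fun r hr => EReal.coe_le_coe_iff.2 hr))
end

section
/- Let f be a Kneser function of order d≥1 and s∈(0,∞). If limsup_{r→0} f(r)/r^s < ∞, then limsup_{r→0} f'_−(r)/r^{s−1} ≤ d·limsup_{r→0} f(r)/r^s < ∞. -/
open Filter Set Topology

/-!
Scaling the increment `f r - f (q r)` down by the factors `q ^ k` costs at most `(q ^ d) ^ k`,
so the increments over `[q ^ (k+1) r, q ^ k r]` telescope against the geometric series of `q ^ d`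
and, since `f > 0`, give `f r - f (q r) ≤ (1 - q ^ d) f r ≤ d (1 - q) f r` (Bernoulli).
Dividing by `r - q r`, every left difference quotient at `r` is at most `d f(r) / r`, hence
so is the left derivative: `f'₋(r) / r ^ (s - 1) ≤ d f(r) / r ^ s`. Take the `limsup` at `0⁺`.
-/

namespace IsKneser

variable {f : ℝ → ℝ} {d : ℝ}

lemma rpow_mul_sub_le (hf : IsKneser f d) {μ a b : ℝ} (hμ₀ : 0 < μ) (hμ₁ : μ ≤ 1)
    (ha : 0 < a) (hab : a ≤ b) :
    μ ^ d * (f b - f a) ≤ f (μ * b) - f (μ * a) := by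
  have h := hf.2 (μ * a) (μ * b) μ⁻¹ (by positivity) (by gcongr)
    ((one_le_inv₀ hμ₀).mpr hμ₁)
  rw [inv_mul_cancel_left₀ hμ₀.ne', inv_mul_cancel_left₀ hμ₀.ne', Real.inv_rpow hμ₀.le]
    at h
  exact (le_inv_mul_iff₀ (Real.rpow_pos_of_pos hμ₀ d)).mp h

lemma geom_sum_mul_sub_le (hf : IsKneser f d) {q r : ℝ} (hq₀ : 0 < q) (hq₁ : q ≤ 1)
    (hr : 0 < r) (N : ℕ) :
    (∑ k ∈ Finset.range N, (q ^ d) ^ k) * (f r - f (q * r)) ≤ f r - f (q ^ N * r) := by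
  rw [Finset.sum_mul]
  calc ∑ k ∈ Finset.range N, (q ^ d) ^ k * (f r - f (q * r))
      ≤ ∑ k ∈ Finset.range N, (f (q ^ k * r) - f (q ^ (k + 1) * r)) := by
        gcongr with k
        rw [Real.rpow_pow_comm hq₀.le, pow_succ, mul_assoc]
        exact hf.rpow_mul_sub_le (pow_pos hq₀ k) (pow_le_one₀ hq₀.le hq₁) (by positivity)
          (mul_le_of_le_one_left hr.le hq₁)
    _ = f r - f (q ^ N * r) := by
        rw [Finset.sum_range_sub' (fun k => f (q ^ k * r)), pow_zero, one_mul]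

lemma sub_le_one_sub_rpow_mul (hf : IsKneser f d) (hd : 0 < d) {q r : ℝ} (hq₀ : 0 < q)
    (hq₁ : q < 1) (hr : 0 < r) :
    f r - f (q * r) ≤ (1 - q ^ d) * f r := by
  set c := q ^ d
  have hc₀ : 0 ≤ c := by positivity
  have hc₁ : c < 1 := Real.rpow_lt_one hq₀.le hq₁ hd
  have hpartial : ∀ N : ℕ, (1 - c ^ N) * (f r - f (q * r)) ≤ (1 - c) * f r := by
    intro N
    have hsum := hf.geom_sum_mul_sub_le hq₀ hq₁.le hr N
    have hpos := hf.1 (q ^ N * r) (by positivity)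
    rw [← geom_sum_mul_neg, mul_comm _ (1 - c), mul_assoc]
    exact mul_le_mul_of_nonneg_left (by linarith) (by linarith)
  have hlim : Tendsto (fun N : ℕ => (1 - c ^ N) * (f r - f (q * r))) atTop
      (𝓝 (f r - f (q * r))) := by
    simpa using ((tendsto_pow_atTop_nhds_zero_of_lt_one hc₀ hc₁).const_sub 1).mul_const
      (f r - f (q * r))
  exact le_of_tendsto' hlim hpartial

lemma sub_le_mul_one_sub_mul (hf : IsKneser f d) (hd : 1 ≤ d) {q r : ℝ} (hq₀ : 0 < q)
    (hq₁ : q < 1) (hr : 0 < r) :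
    f r - f (q * r) ≤ d * (1 - q) * f r := by
  have hbernoulli : 1 + d * (q - 1) ≤ q ^ d := by
    simpa using one_add_mul_self_le_rpow_one_add (by linarith : (-1 : ℝ) ≤ q - 1) hd
  calc f r - f (q * r) ≤ (1 - q ^ d) * f r :=
        hf.sub_le_one_sub_rpow_mul (by linarith) hq₀ hq₁ hr
    _ ≤ d * (1 - q) * f r := by
        gcongr
        · exact (hf.1 r hr).le
        · linarith

lemma slope_le (hf : IsKneser f d) (hd : 1 ≤ d) {x r : ℝ} (hx : 0 < x) (hxr : x < r) :
    slope f x r ≤ d * f r / r := by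
  have hr : 0 < r := hx.trans hxr
  have h := hf.sub_le_mul_one_sub_mul hd (div_pos hx hr) ((div_lt_one hr).mpr hxr) hr
  rw [div_mul_cancel₀ x hr.ne'] at h
  rw [slope_def_field, div_le_div_iff₀ (sub_pos.mpr hxr) hr]
  calc (f r - f x) * r ≤ d * (1 - x / r) * f r * r := by gcongr
    _ = d * f r * (r - x) := by field_simp

lemma derivWithin_Iio_le (hf : IsKneser f d) (hd : 1 ≤ d) {r : ℝ} (hr : 0 < r) :
    derivWithin f (Iio r) r ≤ d * f r / r := by
  by_cases hdiff : DifferentiableWithinAt ℝ f (Iio r) r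
  · have hslope :=
      (hasDerivWithinAt_iff_tendsto_slope' self_notMem_Iio).mp hdiff.hasDerivWithinAt
    refine le_of_tendsto hslope ?_
    filter_upwards [Ioo_mem_nhdsLT hr] with x hx
    rw [slope_comm]
    exact hf.slope_le hd hx.1 hx.2
  · rw [derivWithin_zero_of_not_differentiableWithinAt hdiff]
    exact div_nonneg (mul_nonneg (by linarith) (hf.1 r hr).le) hr.le

lemma derivWithin_Iio_div_rpow_le (hf : IsKneser f d) (hd : 1 ≤ d) (s : ℝ) {r : ℝ}
    (hr : 0 < r) :
    derivWithin f (Iio r) r / r ^ (s - 1) ≤ d * (f r / r ^ s) := by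
  calc derivWithin f (Iio r) r / r ^ (s - 1) ≤ d * f r / r / r ^ (s - 1) := by
        gcongr
        exact hf.derivWithin_Iio_le hd hr
    _ = d * (f r / r ^ s) := by
        rw [Real.rpow_sub_one hr.ne']
        field_simp

end IsKneser

lemma limsup_coe_le_coe_mul_limsup_coe {α : Type*} {l : Filter α} [l.NeBot] {u v : α → ℝ}
    {c : ℝ} (hc : 0 ≤ c) (h : ∀ᶠ x in l, u x ≤ c * v x) :
    limsup (fun x => (u x : EReal)) l ≤ c * limsup (fun x => (v x : EReal)) l := by
  rw [← EReal.limsup_const_mul_of_nonneg_of_ne_top (EReal.coe_nonneg.mpr hc)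
    (EReal.coe_ne_top c)]
  exact limsup_le_limsup <|
    h.mono fun x hx => (EReal.coe_le_coe hx).trans_eq (EReal.coe_mul c (v x))

theorem kneser_limsup_leftDeriv_le_general (f : ℝ → ℝ) (d s : ℝ) (hd : 1 ≤ d)
    (hf : IsKneser f d)
    (h2 : Filter.limsup (fun r : ℝ => ((f r / r ^ s : ℝ) : EReal)) (𝓝[>] (0 : ℝ)) < ⊤) :
    Filter.limsup (fun r : ℝ => ((derivWithin f (Set.Iio r) r / r ^ (s - 1) : ℝ) : EReal))
        (𝓝[>] (0 : ℝ)) ≤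
      (d : EReal) * Filter.limsup (fun r : ℝ => ((f r / r ^ s : ℝ) : EReal)) (𝓝[>] (0 : ℝ)) ∧
    Filter.limsup (fun r : ℝ => ((derivWithin f (Set.Iio r) r / r ^ (s - 1) : ℝ) : EReal))
        (𝓝[>] (0 : ℝ)) < ⊤ := by
  have hd₀ : (0 : ℝ) ≤ d := zero_le_one.trans hd
  have hbound := limsup_coe_le_coe_mul_limsup_coe (l := 𝓝[>] (0 : ℝ)) hd₀ <|
    eventually_mem_nhdsWithin.mono fun r (hr : 0 < r) => hf.derivWithin_Iio_div_rpow_le hd s hr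
  refine ⟨hbound, hbound.trans_lt (Ne.lt_top ?_)⟩
  exact (EReal.mul_ne_top _ _).mpr ⟨.inl (EReal.coe_ne_bot d), .inl (EReal.coe_nonneg.mpr hd₀),
    .inl (EReal.coe_ne_top d), .inr h2.ne⟩

theorem kneser_limsup_leftDeriv_le (f : ℝ → ℝ) (d s : ℝ) (hd : 1 ≤ d)
    (hf : IsKneser f d) (hs : 0 < s)
    (h2 : Filter.limsup (fun r : ℝ => ((f r / r ^ s : ℝ) : EReal)) (𝓝[>] (0 : ℝ)) < ⊤) :
    Filter.limsup (fun r : ℝ => ((derivWithin f (Set.Iio r) r / r ^ (s - 1) : ℝ) : EReal))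
        (𝓝[>] (0 : ℝ)) ≤
      (d : EReal) * Filter.limsup (fun r : ℝ => ((f r / r ^ s : ℝ) : EReal)) (𝓝[>] (0 : ℝ)) ∧
    Filter.limsup (fun r : ℝ => ((derivWithin f (Set.Iio r) r / r ^ (s - 1) : ℝ) : EReal))
        (𝓝[>] (0 : ℝ)) < ⊤ :=
  kneser_limsup_leftDeriv_le_general f d s hd hf h2
end

section
/- Let f be a Kneser function of order d≥1 and suppose lim_{r→0} f(r)/r^s = C for some constants s,C∈(0,∞). Then lim_{r→0} f'_+(r)/(s r^{s−1}) = C and lim_{r→0} f'_−(r)/(s r^{s−1}) = C. -/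
open Filter Set Topology

/-!
Substituting `g x = f (x ^ (1 / d))` turns `f` into a Kneser function of order 1. Such a `g` is
monotone and left-continuous, and on every geometric grid `A, A c, A c², …` the Kneser inequality
says that its slopes over consecutive cells decrease; approximating an arbitrary middle point from
below by grid points, `g` is concave on `(0, ∞)`. Hence `f'_±(r) = g'_±(r ^ d) · d r ^ (d - 1)`
exist and lie between the secants `(f (μ r) - f r) / ((μ r) ^ d - r ^ d) · d r ^ (d - 1)` for
`μ > 1` and for `μ < 1`. Divided by `s r ^ (s - 1)`, such a secant tends to
`C (μ ^ s - 1) / (μ ^ d - 1) · d / s` as `r → 0`, and this tends to `C` as `μ → 1`.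
-/

namespace IsKneser

variable {h : ℝ → ℝ}

theorem sub_le_mul_sub (hh : IsKneser h 1) {a b m : ℝ} (ha : 0 < a) (hab : a ≤ b)
    (hm : 1 ≤ m) : h (m * b) - h (m * a) ≤ m * (h b - h a) := by
  simpa using hh.2 a b m ha hab hm

theorem comp_rpow_inv {f : ℝ → ℝ} {d : ℝ} (hd : 0 < d) (hf : IsKneser f d) :
    IsKneser (fun x => f (x ^ d⁻¹)) 1 := by
  refine ⟨fun x hx => hf.1 _ (Real.rpow_pos_of_pos hx _), fun a b m ha hab hm => ?_⟩
  have hm0 : 0 ≤ m := zero_le_one.trans hm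
  have key := hf.2 (a ^ d⁻¹) (b ^ d⁻¹) (m ^ d⁻¹) (Real.rpow_pos_of_pos ha _)
    (Real.rpow_le_rpow ha.le hab (by positivity)) (Real.one_le_rpow hm (by positivity))
  rwa [← Real.rpow_mul hm0, inv_mul_cancel₀ hd.ne', ← Real.mul_rpow hm0 (ha.trans_le hab).le,
    ← Real.mul_rpow hm0 ha.le] at key

theorem monotoneOn_s4 (hh : IsKneser h 1) : MonotoneOn h (Ioi 0) := by
  intro x hx y _ hxy
  by_contra! hlt
  set m := y / x
  have hm : 1 ≤ m := (one_le_div hx).2 hxy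
  have hmx : m * x = y := div_mul_cancel₀ y (ne_of_gt hx)
  -- each step from `m ^ n * x` to `m ^ (n + 1) * x` loses at least `h x - h y`
  have hdecr : ∀ n : ℕ, h (m ^ n * x) ≤ h x - n * (h x - h y) := by
    intro n
    induction n with
    | zero => simp
    | succ n ih =>
      have hstep := hh.sub_le_mul_sub hx hxy (one_le_pow₀ (n := n) hm)
      rw [← hmx, ← mul_assoc, ← pow_succ, hmx] at hstep
      have : m ^ n * (h y - h x) ≤ h y - h x := by nlinarith [one_le_pow₀ (n := n) hm]
      push_cast
      linarith
  obtain ⟨n, hn⟩ := exists_nat_gt (h x / (h x - h y))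
  rw [div_lt_iff₀ (by linarith)] at hn
  linarith [hdecr n, hh.1 _ (mul_pos (pow_pos (zero_lt_one.trans_le hm) n) hx)]

theorem nat_mul_pow_mul_sub_le (hh : IsKneser h 1) {r t : ℝ} (hr : 0 < r) (ht0 : 0 < t)
    (ht1 : t ≤ 1) (n : ℕ) : n * t ^ n * (h r - h (t * r)) ≤ h r := by
  have hjump : 0 ≤ h r - h (t * r) :=
    sub_nonneg.2 (hh.monotoneOn_s4 (mul_pos ht0 hr) hr (mul_le_of_le_one_left hr.le ht1))
  -- the jump over `[t r, r]` is at most `t⁻ᵏ` times the jump over `[t^(k+1) r, t^k r]`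
  have hstep : ∀ k < n, t ^ n * (h r - h (t * r)) ≤ h (t ^ k * r) - h (t ^ (k + 1) * r) := by
    intro k hk
    have htk : 0 < t ^ k := pow_pos ht0 k
    have hK := hh.sub_le_mul_sub (mul_pos (pow_pos ht0 (k + 1)) hr)
      (mul_le_mul_of_nonneg_right (pow_le_pow_of_le_one ht0.le ht1 k.le_succ) hr.le)
      (one_le_inv₀ htk |>.2 (pow_le_one₀ ht0.le ht1))
    have hb : (t ^ k)⁻¹ * (t ^ k * r) = r := by field_simp
    have ha : (t ^ k)⁻¹ * (t ^ (k + 1) * r) = t * r := by field_simp; ring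
    rw [hb, ha] at hK
    calc t ^ n * (h r - h (t * r)) ≤ t ^ k * (h r - h (t * r)) :=
          mul_le_mul_of_nonneg_right (pow_le_pow_of_le_one ht0.le ht1 hk.le) hjump
      _ ≤ _ := by rwa [← le_div_iff₀' htk, div_eq_inv_mul]
  calc n * t ^ n * (h r - h (t * r)) = ∑ _k ∈ Finset.range n, t ^ n * (h r - h (t * r)) := by
        simp [mul_assoc]
    _ ≤ ∑ k ∈ Finset.range n, (h (t ^ k * r) - h (t ^ (k + 1) * r)) :=
        Finset.sum_le_sum fun k hk => hstep k (Finset.mem_range.1 hk)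
    _ = h r - h (t ^ n * r) := by rw [Finset.sum_range_sub' (fun k => h (t ^ k * r))]; simp
    _ ≤ h r := by linarith [hh.1 _ (mul_pos (pow_pos ht0 n) hr)]

theorem continuousWithinAt_Iic (hh : IsKneser h 1) {r : ℝ} (hr : 0 < r) :
    ContinuousWithinAt h (Iic r) r := by
  refine tendsto_order.2 ⟨fun b hb => ?_, fun b hb => ?_⟩
  · obtain ⟨n, hn⟩ := exists_nat_gt (2 * h r / (h r - b))
    have hn0 : (0 : ℝ) < n := lt_trans (by have := hh.1 r hr; positivity) hn
    have hpow : Tendsto (fun t : ℝ => t ^ n) (𝓝[<] 1) (𝓝 1) := by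
      simpa using ((continuous_pow n).tendsto (1 : ℝ)).mono_left nhdsWithin_le_nhds
    obtain ⟨t, hhalf, ht⟩ :=
      ((hpow.eventually (lt_mem_nhds one_half_lt_one)).and (Ioo_mem_nhdsLT one_pos)).exists
    have hbound := hh.nat_mul_pow_mul_sub_le hr ht.1 ht.2.le n
    rw [div_lt_iff₀ (by linarith)] at hn
    have htr : b < h (t * r) := by
      by_contra! hle
      have : n / 2 * (h r - b) ≤ n * t ^ n * (h r - h (t * r)) := by
        gcongr
        · nlinarith
      linarith
    filter_upwards [Ioc_mem_nhdsLE (mul_lt_of_lt_one_left hr ht.2)] with x hx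
    exact htr.trans_le (hh.monotoneOn_s4 (mul_pos ht.1 hr) ((mul_pos ht.1 hr).trans hx.1) hx.1.le)
  · filter_upwards [Ioc_mem_nhdsLE hr] with x hx
    exact (hh.monotoneOn_s4 hx.1 hr hx.2).trans_lt hb

theorem pow_mul_sub_le_pow_mul_sub (hh : IsKneser h 1) {A c : ℝ} (hA : 0 < A) (hc : 1 ≤ c)
    {i j : ℕ} (hij : i ≤ j) :
    c ^ i * (h (c ^ (j + 1) * A) - h (c ^ j * A)) ≤
      c ^ j * (h (c ^ (i + 1) * A) - h (c ^ i * A)) := by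
  have hK := hh.sub_le_mul_sub (mul_pos (pow_pos (zero_lt_one.trans_le hc) i) hA)
    (mul_le_mul_of_nonneg_right (pow_le_pow_right₀ hc i.le_succ) hA.le)
    (one_le_pow₀ (n := j - i) hc)
  rw [← mul_assoc, ← mul_assoc, ← pow_add, ← pow_add, show j - i + (i + 1) = j + 1 by omega,
    show j - i + i = j by omega] at hK
  calc c ^ i * (h (c ^ (j + 1) * A) - h (c ^ j * A))
      ≤ c ^ i * (c ^ (j - i) * (h (c ^ (i + 1) * A) - h (c ^ i * A))) :=
        mul_le_mul_of_nonneg_left hK (pow_nonneg (zero_le_one.trans hc) i)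
    _ = _ := by rw [← mul_assoc, ← pow_add, show i + (j - i) = j by omega]

theorem slope_anti_adjacent_pow (hh : IsKneser h 1) {A c : ℝ} (hA : 0 < A) (hc : 1 ≤ c)
    (k l : ℕ) :
    (h (c ^ (k + l) * A) - h (c ^ k * A)) * (c ^ k * A - A) ≤
      (c ^ (k + l) * A - c ^ k * A) * (h (c ^ k * A) - h A) := by
  set σ : ℕ → ℝ := fun j => h (c ^ (j + 1) * A) - h (c ^ j * A)
  have hck : 0 < c ^ k := pow_pos (zero_lt_one.trans_le hc) k
  -- the slope over the `j`-th grid cell is proportional to `σ j / c ^ j`, which is antitone in `j`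
  have hleft : σ k * ∑ j ∈ Finset.range k, c ^ j ≤ c ^ k * (h (c ^ k * A) - h A) := by
    have htel : h (c ^ k * A) - h A = ∑ j ∈ Finset.range k, σ j := by
      simp [σ, Finset.sum_range_sub (fun j => h (c ^ j * A))]
    rw [htel, Finset.mul_sum, Finset.mul_sum]
    refine Finset.sum_le_sum fun j hj => ?_
    rw [mul_comm]
    exact hh.pow_mul_sub_le_pow_mul_sub hA hc (Finset.mem_range.1 hj).le
  have hright : c ^ k * (h (c ^ (k + l) * A) - h (c ^ k * A)) ≤
      σ k * ∑ j ∈ Finset.range l, c ^ (k + j) := by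
    have htel : h (c ^ (k + l) * A) - h (c ^ k * A) = ∑ j ∈ Finset.range l, σ (k + j) := by
      simp [σ, add_assoc, Finset.sum_range_sub (fun j => h (c ^ (k + j) * A))]
    rw [htel, Finset.mul_sum, Finset.mul_sum]
    refine Finset.sum_le_sum fun j _ => ?_
    rw [mul_comm (σ k)]
    exact hh.pow_mul_sub_le_pow_mul_sub hA hc (Nat.le_add_right k j)
  have hG₁ : c ^ k * A - A = (∑ j ∈ Finset.range k, c ^ j) * ((c - 1) * A) := by
    linear_combination (-A) * geom_sum_mul c k
  have hG₂ : c ^ (k + l) * A - c ^ k * A =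
      (∑ j ∈ Finset.range l, c ^ (k + j)) * ((c - 1) * A) := by
    simp_rw [pow_add, ← Finset.mul_sum]
    linear_combination (-(A * c ^ k)) * geom_sum_mul c l
  set G₁ := ∑ j ∈ Finset.range k, c ^ j
  set G₂ := ∑ j ∈ Finset.range l, c ^ (k + j)
  have hcross : (h (c ^ (k + l) * A) - h (c ^ k * A)) * G₁ ≤ G₂ * (h (c ^ k * A) - h A) :=
    le_of_mul_le_mul_left (by linear_combination (mul_le_mul_of_nonneg_right hright
      (by positivity : 0 ≤ G₁)) + mul_le_mul_of_nonneg_left hleft (by positivity : 0 ≤ G₂)) hck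
  rw [hG₁, hG₂]
  linear_combination mul_le_mul_of_nonneg_right hcross (mul_nonneg (sub_nonneg.2 hc) hA.le)

theorem slope_anti_adjacent_rpow (hh : IsKneser h 1) {A ρ : ℝ} (hA : 0 < A) (hρ : 1 ≤ ρ)
    {m n : ℕ} (hmn : m ≤ n) (hn : 0 < n) :
    (h (A * ρ) - h (A * ρ ^ ((m : ℝ) / n))) * (A * ρ ^ ((m : ℝ) / n) - A) ≤
      (A * ρ - A * ρ ^ ((m : ℝ) / n)) * (h (A * ρ ^ ((m : ℝ) / n)) - h A) := by
  have hn0 : (0 : ℝ) < n := by exact_mod_cast hn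
  have hgrid : ∀ k : ℕ, (ρ ^ (n : ℝ)⁻¹) ^ k * A = A * ρ ^ ((k : ℝ) / n) := fun k => by
    rw [← Real.rpow_mul_natCast (by positivity), inv_mul_eq_div, mul_comm]
  have := hh.slope_anti_adjacent_pow hA (Real.one_le_rpow hρ (inv_nonneg.2 hn0.le)) m (n - m)
  rwa [Nat.add_sub_cancel' hmn, hgrid, hgrid, div_self hn0.ne', Real.rpow_one] at this

theorem slope_anti_adjacent (hh : IsKneser h 1) {A B C : ℝ} (hA : 0 < A) (hAB : A < B)
    (hBC : B < C) : (h C - h B) * (B - A) ≤ (C - B) * (h B - h A) := by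
  set ρ := C / A
  have hρ : 1 < ρ := (one_lt_div hA).2 (hAB.trans hBC)
  set θ := Real.logb ρ (B / A)
  have hθ0 : 0 ≤ θ := Real.logb_nonneg hρ ((one_le_div hA).2 hAB.le)
  have hθ1 : θ ≤ 1 := by
    rw [← Real.logb_self_eq_one hρ]
    exact Real.logb_le_logb_of_le hρ (div_pos (hA.trans hAB) hA)
      (div_le_div_of_nonneg_right hBC.le hA.le)
  have hB : A * ρ ^ θ = B := by
    rw [Real.rpow_logb (by linarith) hρ.ne' (div_pos (hA.trans hAB) hA)]
    field_simp
  -- the grid points `A ρ^(⌊θ n⌋/n)` approach `B = A ρ^θ` from below, so left-continuity suffices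
  set b : ℕ → ℝ := fun n => A * ρ ^ ((⌊θ * n⌋₊ : ℝ) / n)
  have hb_le : ∀ n, b n ≤ B := fun n => by
    rw [← hB]
    refine mul_le_mul_of_nonneg_left (Real.rpow_le_rpow_of_exponent_le hρ.le ?_) hA.le
    rcases n.eq_zero_or_pos with rfl | hn
    · simpa using hθ0
    · rw [div_le_iff₀ (by exact_mod_cast hn)]
      exact Nat.floor_le (by positivity)
  have hb : Tendsto b atTop (𝓝 B) := by
    rw [← hB]
    exact tendsto_const_nhds.mul ((Real.continuous_const_rpow (by positivity)).tendsto θ |>.comp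
      ((tendsto_nat_floor_mul_div_atTop hθ0).comp tendsto_natCast_atTop_atTop))
  have hhb : Tendsto (fun n => h (b n)) atTop (𝓝 (h B)) :=
    (hh.continuousWithinAt_Iic (hA.trans hAB)).tendsto.comp
      (tendsto_nhdsWithin_iff.2 ⟨hb, Eventually.of_forall hb_le⟩)
  have hgrid : ∀ n ≥ 1, (h C - h (b n)) * (b n - A) ≤ (C - b n) * (h (b n) - h A) :=
    fun n hn => mul_div_cancel₀ C hA.ne' ▸ hh.slope_anti_adjacent_rpow hA hρ.le
      (Nat.floor_le_of_le (by nlinarith)) hn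
  exact le_of_tendsto_of_tendsto ((tendsto_const_nhds.sub hhb).mul (hb.sub tendsto_const_nhds))
    ((tendsto_const_nhds.sub hb).mul (hhb.sub tendsto_const_nhds))
    (eventually_atTop.2 ⟨1, hgrid⟩)

theorem concaveOn (hh : IsKneser h 1) : ConcaveOn ℝ (Ioi 0) h :=
  concaveOn_of_slope_anti_adjacent (convex_Ioi 0) fun hx _ hxy hyz => by
    rw [div_le_div_iff₀ (by linarith) (by linarith)]
    linarith [hh.slope_anti_adjacent hx hxy hyz]

end IsKneser

namespace ConcaveOn

variable {S : Set ℝ} {g : ℝ → ℝ} {x : ℝ}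

theorem differentiableWithinAt_Ioi_of_mem_interior (hgc : ConcaveOn ℝ S g)
    (hx : x ∈ interior S) : DifferentiableWithinAt ℝ g (Ioi x) x := by
  simpa using (hgc.neg.differentiableWithinAt_Ioi_of_mem_interior hx).neg

theorem differentiableWithinAt_Iio_of_mem_interior (hgc : ConcaveOn ℝ S g)
    (hx : x ∈ interior S) : DifferentiableWithinAt ℝ g (Iio x) x := by
  simpa using (hgc.neg.differentiableWithinAt_Iio_of_mem_interior hx).neg

theorem rightDeriv_le_leftDeriv_of_mem_interior (hgc : ConcaveOn ℝ S g)
    (hx : x ∈ interior S) : derivWithin g (Ioi x) x ≤ derivWithin g (Iio x) x := by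
  simpa [derivWithin.neg] using hgc.neg.leftDeriv_le_rightDeriv_of_mem_interior hx

theorem slope_le_derivWithin_and_derivWithin_le_slope (hgc : ConcaveOn ℝ S g)
    (hx : x ∈ interior S) {T : Set ℝ} (hT : T = Ioi x ∨ T = Iio x) :
    (∀ z ∈ S, x < z → slope g x z ≤ derivWithin g T x) ∧
      (∀ w ∈ S, w < x → derivWithin g T x ≤ slope g w x) := by
  have hr := hgc.differentiableWithinAt_Ioi_of_mem_interior hx
  have hl := hgc.differentiableWithinAt_Iio_of_mem_interior hx
  have hrl := hgc.rightDeriv_le_leftDeriv_of_mem_interior hx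
  have hxS := interior_subset hx
  rcases hT with rfl | rfl
  · exact ⟨fun z hz hxz => hgc.slope_le_rightDeriv hxS hz hxz hr,
      fun w hw hwx => hrl.trans (hgc.leftDeriv_le_slope hw hxS hwx hl)⟩
  · exact ⟨fun z hz hxz => (hgc.slope_le_rightDeriv hxS hz hxz hr).trans hrl,
      fun w hw hwx => hgc.leftDeriv_le_slope hw hxS hwx hl⟩

end ConcaveOn

theorem derivWithin_comp_rpow {g : ℝ → ℝ} {d r : ℝ} {S T : Set ℝ} (hr : 0 < r)
    (hg : DifferentiableWithinAt ℝ g T (r ^ d)) (hST : MapsTo (· ^ d) (S ∩ Ioi 0) T)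
    (hS : UniqueDiffWithinAt ℝ S r) :
    derivWithin (fun x => g (x ^ d)) S r = derivWithin g T (r ^ d) * (d * r ^ (d - 1)) :=
  ((hasDerivWithinAt_inter (Ioi_mem_nhds hr)).1 (hg.hasDerivWithinAt.comp r
    (Real.hasDerivAt_rpow_const (Or.inl hr.ne')).hasDerivWithinAt hST)).derivWithin hS

/-- For `f = g ∘ (· ^ d)` this is the secant slope of `g` between `r ^ d` and `(μ r) ^ d`,
pushed through the chain rule at `r`. -/
noncomputable def powSecant (f : ℝ → ℝ) (d r μ : ℝ) : ℝ :=
  (f (μ * r) - f r) / ((μ * r) ^ d - r ^ d) * (d * r ^ (d - 1))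

theorem IsKneser.powSecant_le_derivWithin_le {f : ℝ → ℝ} {d : ℝ} (hd : 0 < d)
    (hf : IsKneser f d) {r D : ℝ} (hr : 0 < r)
    (hD : D = derivWithin f (Ioi r) r ∨ D = derivWithin f (Iio r) r) :
    (∀ μ, 1 < μ → powSecant f d r μ ≤ D) ∧ (∀ μ ∈ Ioo 0 1, D ≤ powSecant f d r μ) := by
  set g : ℝ → ℝ := fun x => f (x ^ d⁻¹)
  have hgc : ConcaveOn ℝ (Ioi 0) g := (hf.comp_rpow_inv hd).concaveOn
  have hg : ∀ x, 0 < x → g (x ^ d) = f x := fun x hx => by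
    simp only [g, ← Real.rpow_mul hx.le, mul_inv_cancel₀ hd.ne', Real.rpow_one]
  have hfg : f =ᶠ[𝓝 r] fun x => g (x ^ d) := by
    filter_upwards [Ioi_mem_nhds hr] with x hx using (hg x hx).symm
  have hrd : r ^ d ∈ interior (Ioi 0) := by
    rw [interior_Ioi]; exact Real.rpow_pos_of_pos hr d
  obtain ⟨T, hT, hDT⟩ : ∃ T, (T = Ioi (r ^ d) ∨ T = Iio (r ^ d)) ∧
      D = derivWithin g T (r ^ d) * (d * r ^ (d - 1)) := by
    rcases hD with rfl | rfl <;> rw [hfg.derivWithin_eq_of_nhds]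
    · exact ⟨_, .inl rfl, derivWithin_comp_rpow hr
        (hgc.differentiableWithinAt_Ioi_of_mem_interior hrd)
        (fun x hx => Real.rpow_lt_rpow hr.le hx.1 hd) (uniqueDiffWithinAt_Ioi r)⟩
    · exact ⟨_, .inr rfl, derivWithin_comp_rpow hr
        (hgc.differentiableWithinAt_Iio_of_mem_interior hrd)
        (fun x hx => Real.rpow_lt_rpow hx.2.out.le hx.1 hd) (uniqueDiffWithinAt_Iio r)⟩
  obtain ⟨hlow, hup⟩ := hgc.slope_le_derivWithin_and_derivWithin_le_slope hrd hT
  have hsecant : ∀ μ, 0 < μ →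
      powSecant f d r μ = slope g (r ^ d) ((μ * r) ^ d) * (d * r ^ (d - 1)) := fun μ hμ => by
    rw [powSecant, slope_def_field, hg _ (mul_pos hμ hr), hg _ hr]
  have hdr : 0 ≤ d * r ^ (d - 1) := by positivity
  rw [hDT]
  refine ⟨fun μ hμ => ?_, fun μ hμ => ?_⟩
  · have hμr : 0 < μ * r := mul_pos (zero_lt_one.trans hμ) hr
    rw [hsecant μ (zero_lt_one.trans hμ)]
    exact mul_le_mul_of_nonneg_right (hlow _ (Real.rpow_pos_of_pos hμr d)
      (Real.rpow_lt_rpow hr.le (lt_mul_of_one_lt_left hr hμ) hd)) hdr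
  · have hμr : 0 < μ * r := mul_pos hμ.1 hr
    rw [hsecant μ hμ.1, slope_comm]
    exact mul_le_mul_of_nonneg_right (hup _ (Real.rpow_pos_of_pos hμr d)
      (Real.rpow_lt_rpow hμr.le (mul_lt_of_lt_one_left hr hμ.2) hd)) hdr

theorem powSecant_div_eq (f : ℝ → ℝ) {d s r μ : ℝ} (hs : s ≠ 0) (hr : 0 < r) (hμ : 0 < μ)
    (hμd : μ ^ d ≠ 1) :
    powSecant f d r μ / (s * r ^ (s - 1)) =
      (μ ^ s * (f (μ * r) / (μ * r) ^ s) - f r / r ^ s) * (d / (s * (μ ^ d - 1))) := by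
  have hd1 : μ ^ d - 1 ≠ 0 := sub_ne_zero.2 hμd
  have hrd : r ^ d ≠ 0 := (Real.rpow_pos_of_pos hr d).ne'
  have hrs : r ^ s ≠ 0 := (Real.rpow_pos_of_pos hr s).ne'
  have hμs : μ ^ s ≠ 0 := (Real.rpow_pos_of_pos hμ s).ne'
  rw [powSecant, Real.mul_rpow hμ.le hr.le, Real.mul_rpow hμ.le hr.le, Real.rpow_sub hr,
    Real.rpow_sub hr, Real.rpow_one,
    show μ ^ d * r ^ d - r ^ d = r ^ d * (μ ^ d - 1) by ring]
  field_simp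

theorem tendsto_powSecant_div {f : ℝ → ℝ} {d s C μ : ℝ} (hs : s ≠ 0) (hμ : 0 < μ)
    (hμd : μ ^ d ≠ 1) (hlim : Tendsto (fun r => f r / r ^ s) (𝓝[>] 0) (𝓝 C)) :
    Tendsto (fun r => powSecant f d r μ / (s * r ^ (s - 1))) (𝓝[>] 0)
      (𝓝 (C * ((μ ^ s - 1) / (μ ^ d - 1) * (d / s)))) := by
  have hscale : Tendsto (μ * ·) (𝓝[>] (0 : ℝ)) (𝓝[>] 0) :=
    tendsto_comap.mono_left (comap_mulLeft_nhdsGT_zero hμ).ge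
  have hlim' := (((hlim.comp hscale).const_mul (μ ^ s)).sub hlim).mul_const
    (d / (s * (μ ^ d - 1)))
  rw [show (μ ^ s * C - C) * (d / (s * (μ ^ d - 1))) = C * ((μ ^ s - 1) / (μ ^ d - 1) * (d / s))
    by field_simp] at hlim'
  refine hlim'.congr' ?_
  filter_upwards [self_mem_nhdsWithin] with r hr
  exact (powSecant_div_eq f hs hr hμ hμd).symm

theorem tendsto_rpow_sub_one_div_rpow_sub_one {d s : ℝ} (hd : d ≠ 0) (hs : s ≠ 0) :
    Tendsto (fun μ : ℝ => (μ ^ s - 1) / (μ ^ d - 1) * (d / s)) (𝓝[≠] 1) (𝓝 1) := by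
  have hslope (p : ℝ) : Tendsto (fun μ : ℝ => (μ ^ p - 1) / (μ - 1)) (𝓝[≠] 1) (𝓝 p) := by
    simpa using (hasDerivAt_iff_tendsto_slope.1 (Real.hasDerivAt_rpow_const (p := p)
      (Or.inl one_ne_zero))).congr fun μ => by rw [slope_def_field, Real.one_rpow]
  have hlim := ((hslope s).div (hslope d) hd).mul_const (d / s)
  rw [show s / d * (d / s) = 1 by field_simp] at hlim
  refine hlim.congr' ?_
  filter_upwards [self_mem_nhdsWithin] with μ hμ
  rw [Pi.div_apply, div_div_div_cancel_right₀ (sub_ne_zero.2 hμ)]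

theorem tendsto_div_of_powSecant_le_le {f g : ℝ → ℝ} {d s C : ℝ} (hd : 0 < d) (hs : 0 < s)
    (hlim : Tendsto (fun r => f r / r ^ s) (𝓝[>] 0) (𝓝 C))
    (hg : ∀ r, 0 < r → (∀ μ, 1 < μ → powSecant f d r μ ≤ g r) ∧
      (∀ μ ∈ Ioo 0 1, g r ≤ powSecant f d r μ)) :
    Tendsto (fun r => g r / (s * r ^ (s - 1))) (𝓝[>] 0) (𝓝 C) := by
  have hE := (tendsto_rpow_sub_one_div_rpow_sub_one hd.ne' hs.ne').const_mul C
  rw [mul_one] at hE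
  have hμd : ∀ μ : ℝ, 0 < μ → μ ≠ 1 → μ ^ d ≠ 1 := fun μ hμ hμ1 => by
    rcases hμ1.lt_or_gt with hlt | hgt
    · exact (Real.rpow_lt_one hμ.le hlt hd).ne
    · exact (Real.one_lt_rpow hgt hd).ne'
  refine tendsto_order.2 ⟨fun l hl => ?_, fun u hu => ?_⟩
  · obtain ⟨μ, hlμ, hμ : 1 < μ⟩ := ((hE.mono_left (nhdsGT_le_nhdsNE 1)).eventually
      (lt_mem_nhds hl) |>.and self_mem_nhdsWithin).exists
    have hμ0 : 0 < μ := zero_lt_one.trans hμ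
    filter_upwards [(tendsto_powSecant_div hs.ne' hμ0 (hμd μ hμ0 hμ.ne') hlim).eventually
      (lt_mem_nhds hlμ), self_mem_nhdsWithin] with r hlr (hr : 0 < r)
    exact hlr.trans_le (div_le_div_of_nonneg_right ((hg r hr).1 μ hμ) (by positivity))
  · obtain ⟨μ, huμ, hμ⟩ := ((hE.mono_left (nhdsLT_le_nhdsNE 1)).eventually
      (gt_mem_nhds hu) |>.and (Ioo_mem_nhdsLT one_pos)).exists
    filter_upwards [(tendsto_powSecant_div hs.ne' hμ.1 (hμd μ hμ.1 hμ.2.ne) hlim).eventually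
      (gt_mem_nhds huμ), self_mem_nhdsWithin] with r hur (hr : 0 < r)
    exact (div_le_div_of_nonneg_right ((hg r hr).2 μ hμ) (by positivity)).trans_lt hur

theorem kneser_deriv_tendsto_of_tendsto_general (f : ℝ → ℝ) (d s C : ℝ) (hd : 1 ≤ d)
    (hf : IsKneser f d) (hs : 0 < s)
    (hlim : Filter.Tendsto (fun r : ℝ => f r / r ^ s) (𝓝[>] (0 : ℝ)) (𝓝 C)) :
    Filter.Tendsto (fun r : ℝ => derivWithin f (Set.Ioi r) r / (s * r ^ (s - 1)))
        (𝓝[>] (0 : ℝ)) (𝓝 C) ∧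
    Filter.Tendsto (fun r : ℝ => derivWithin f (Set.Iio r) r / (s * r ^ (s - 1)))
        (𝓝[>] (0 : ℝ)) (𝓝 C) := by
  have hd0 : 0 < d := zero_lt_one.trans_le hd
  exact ⟨tendsto_div_of_powSecant_le_le hd0 hs hlim fun r hr =>
      hf.powSecant_le_derivWithin_le hd0 hr (.inl rfl),
    tendsto_div_of_powSecant_le_le hd0 hs hlim fun r hr =>
      hf.powSecant_le_derivWithin_le hd0 hr (.inr rfl)⟩

theorem kneser_deriv_tendsto_of_tendsto (f : ℝ → ℝ) (d s C : ℝ) (hd : 1 ≤ d)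
    (hf : IsKneser f d) (hs : 0 < s) (hC : 0 < C)
    (hlim : Filter.Tendsto (fun r : ℝ => f r / r ^ s) (𝓝[>] (0 : ℝ)) (𝓝 C)) :
    Filter.Tendsto (fun r : ℝ => derivWithin f (Set.Ioi r) r / (s * r ^ (s - 1)))
        (𝓝[>] (0 : ℝ)) (𝓝 C) ∧
    Filter.Tendsto (fun r : ℝ => derivWithin f (Set.Iio r) r / (s * r ^ (s - 1)))
        (𝓝[>] (0 : ℝ)) (𝓝 C) :=
  kneser_deriv_tendsto_of_tendsto_general f d s C hd hf hs hlim
end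

section
/- Define a Kneser function f of order 2 by prescribing f'(x)=2a_i x on (r_{i+1},r_i) where r_i=2^{-i} and a_i=2^{2i}/(i(i+1)), and f(r) = Σ_{j≥i} a_j(r_j²−r_{j+1}²) + ∫_{r_i}^r 2a_i y dy for r∈(r_i,r_{i−1}]. Then f(r_i) = 3/(4i) for all i≥1, and consequently with h(r)=(3 log 2)/(4|log r|) one has lim_{r→0} f(r)/h(r) = 1. -/
open Filter Set Topology

/-- `r_i = 2^{-i}`. -/
noncomputable def rseq (i : ℕ) : ℝ := ((2 : ℝ) ^ i)⁻¹

/-- `a_i = 2^{2i} / (i(i+1))`. -/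
noncomputable def aseq (i : ℕ) : ℝ := (2 : ℝ) ^ (2 * i) / ((i : ℝ) * ((i : ℝ) + 1))

/-!
On `(r_{i+1}, r_i]` the function is `3/(4i) + a_i (x² - r_i²)`, because the tail sum telescopes:
`a_j (r_j² - r_{j+1}²) = 3/(4j) - 3/(4(j+1))`. Hence `f` takes values in `(3/(4(i+1)), 3/(4i)]`
there. Since `|log x| / log 2 ∈ [i, i+1)` on the same interval, `h` takes values in that interval
too, so `|f/h - 1| ≤ 1/i`, and `i = ⌊-log₂ x⌋ → ∞` as `x → 0`.
-/

lemma hasSum_sub_succ_of_antitone {g : ℕ → ℝ} {l : ℝ} (hg : Antitone g)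
    (hlim : Tendsto g atTop (𝓝 l)) : HasSum (fun n ↦ g n - g (n + 1)) (g 0 - l) := by
  rw [hasSum_iff_tendsto_nat_of_nonneg fun n ↦ sub_nonneg.2 (hg n.le_succ)]
  simp_rw [Finset.sum_range_sub']
  exact tendsto_const_nhds.sub hlim

lemma abs_div_sub_one_le {a b y z : ℝ} (ha : 0 < a) (hy : y ∈ Icc a b) (hz : z ∈ Icc a b) :
    |y / z - 1| ≤ b / a - 1 := by
  have hb : 0 < b := ha.trans_le (hy.1.trans hy.2)
  have hz0 : 0 < z := ha.trans_le hz.1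
  have hupper : y / z ≤ b / a := div_le_div₀ hb.le hy.2 ha hz.1
  have hlower : a / b ≤ y / z := div_le_div₀ (ha.le.trans hy.1) hy.1 hz0 hz.2
  have hab : 1 - a / b ≤ b / a - 1 := by
    rw [one_sub_div hb.ne', div_sub_one ha.ne']
    exact div_le_div_of_nonneg_left (sub_nonneg.2 (hy.1.trans hy.2)) ha (hy.1.trans hy.2)
  rw [abs_sub_le_iff]
  constructor <;> linarith

lemma rseq_pos (i : ℕ) : 0 < rseq i := by
  unfold rseq; positivity

lemma rseq_succ_lt (i : ℕ) : rseq (i + 1) < rseq i :=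
  inv_strictAnti₀ (by positivity) (pow_lt_pow_right₀ one_lt_two i.lt_succ_self)

lemma logb_rseq (i : ℕ) : Real.logb 2 (rseq i) = -i := by
  rw [rseq, Real.logb_inv, Real.logb_pow, Real.logb_self_eq_one one_lt_two, mul_one]

lemma mem_Ioc_rseq_iff {i : ℕ} {x : ℝ} (hx : 0 < x) :
    x ∈ Ioc (rseq (i + 1)) (rseq i) ↔
      (i : ℝ) ≤ -Real.logb 2 x ∧ -Real.logb 2 x < i + 1 := by
  rw [mem_Ioc, ← Real.logb_lt_logb_iff one_lt_two (rseq_pos _) hx,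
    ← Real.logb_le_logb one_lt_two hx (rseq_pos _), logb_rseq, logb_rseq]
  push_cast
  constructor <;> rintro ⟨h₁, h₂⟩ <;> constructor <;> linarith

lemma aseq_mul_sq_sub_sq {j : ℕ} (hj : 0 < j) :
    aseq j * (rseq j ^ 2 - rseq (j + 1) ^ 2) = 3 / (4 * (j : ℝ)) - 3 / (4 * ((j : ℝ) + 1)) := by
  have : (0 : ℝ) < j := by exact_mod_cast hj
  rw [aseq, rseq, rseq, pow_mul', pow_succ]
  field_simp
  ring

lemma hasSum_aseq_tail {i : ℕ} (hi : 0 < i) :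
    HasSum (fun j : ℕ ↦ if i ≤ j then aseq j * (rseq j ^ 2 - rseq (j + 1) ^ 2) else 0)
      (3 / (4 * (i : ℝ))) := by
  set g : ℕ → ℝ := fun j ↦ 3 / (4 * ((max i j : ℕ) : ℝ))
  have hg_anti : Antitone g := fun a b hab ↦ by
    have : (0 : ℝ) < (max i a : ℕ) := by exact_mod_cast hi.trans_le (le_max_left _ _)
    dsimp only [g]
    gcongr
  have hg_lim : Tendsto g atTop (𝓝 0) := by
    have : Tendsto (fun j : ℕ ↦ 3 / 4 * (1 / (j : ℝ))) atTop (𝓝 (3 / 4 * 0)) :=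
      tendsto_one_div_atTop_nhds_zero_nat.const_mul _
    refine (mul_zero (3 / 4 : ℝ) ▸ this).congr' ?_
    filter_upwards [eventually_ge_atTop i] with j hj
    simp only [g, max_eq_right hj]
    ring
  convert hasSum_sub_succ_of_antitone hg_anti hg_lim using 1
  · ext j
    split_ifs with h
    · simp only [g, max_eq_right h, max_eq_right (h.trans j.le_succ),
        aseq_mul_sq_sub_sq (hi.trans_le h)]
      push_cast
      ring
    · simp only [g, max_eq_left (not_le.1 h).le, max_eq_left (not_le.1 h : j < i).nat_succ_le,
        sub_self]
  · simp [g]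

lemma div_abs_log_mem_Icc {i : ℕ} (hi : 0 < i) {x : ℝ}
    (hx : x ∈ Ioc (rseq (i + 1)) (rseq i)) :
    3 * Real.log 2 / (4 * |Real.log x|) ∈ Icc (3 / (4 * ((i : ℝ) + 1))) (3 / (4 * (i : ℝ))) := by
  have hx0 : 0 < x := (rseq_pos _).trans hx.1
  obtain ⟨h₁, h₂⟩ := (mem_Ioc_rseq_iff hx0).1 hx
  have hi' : (0 : ℝ) < i := by exact_mod_cast hi
  have hlog2 : 0 < Real.log 2 := Real.log_pos one_lt_two
  have hlog : |Real.log x| = -Real.logb 2 x * Real.log 2 := by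
    rw [← div_mul_cancel₀ (Real.log x) hlog2.ne', Real.log_div_log, abs_mul,
      abs_of_neg (by linarith), abs_of_pos hlog2]
  have heq : 3 * Real.log 2 / (4 * |Real.log x|) = 3 / (4 * -Real.logb 2 x) := by
    rw [hlog]
    field_simp
  rw [heq]
  constructor
  · gcongr
    linarith
  · gcongr

noncomputable def kneserPiece (i : ℕ) (x : ℝ) : ℝ :=
  3 / (4 * (i : ℝ)) + aseq i * (x ^ 2 - rseq i ^ 2)

lemma kneserPiece_mem_Icc {i : ℕ} (hi : 0 < i) {x : ℝ}
    (hx : x ∈ Ioc (rseq (i + 1)) (rseq i)) :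
    kneserPiece i x ∈ Icc (3 / (4 * ((i : ℝ) + 1))) (3 / (4 * (i : ℝ))) := by
  have hx0 : 0 < x := (rseq_pos _).trans hx.1
  have ha : 0 < aseq i := by
    have : (0 : ℝ) < i := by exact_mod_cast hi
    unfold aseq; positivity
  have h₁ : rseq (i + 1) ^ 2 < x ^ 2 := pow_lt_pow_left₀ hx.1 (rseq_pos _).le two_ne_zero
  have h₂ : x ^ 2 ≤ rseq i ^ 2 := pow_le_pow_left₀ hx0.le hx.2 2
  have hterm := aseq_mul_sq_sub_sq hi
  unfold kneserPiece
  constructor <;> nlinarith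

theorem kneser_example_value (f : ℝ → ℝ)
    (hf : ∀ i : ℕ, 1 ≤ i → ∀ x : ℝ, rseq (i + 1) < x → x ≤ rseq i →
      f x = (∑' j : ℕ, if i ≤ j then aseq j * ((rseq j) ^ 2 - (rseq (j + 1)) ^ 2) else 0) +
        aseq i * (x ^ 2 - (rseq i) ^ 2)) :
    (∀ i : ℕ, 1 ≤ i → f (rseq i) = 3 / (4 * (i : ℝ))) ∧
      Filter.Tendsto (fun x : ℝ => f x / (3 * Real.log 2 / (4 * |Real.log x|)))
        (𝓝[>] (0 : ℝ)) (𝓝 1) := by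
  have hpiece : ∀ i, 0 < i → ∀ x ∈ Ioc (rseq (i + 1)) (rseq i), f x = kneserPiece i x :=
    fun i hi x hx ↦ by rw [hf i hi x hx.1 hx.2, (hasSum_aseq_tail hi).tsum_eq, kneserPiece]
  refine ⟨fun i hi ↦ ?_, ?_⟩
  · rw [hpiece i hi _ ⟨rseq_succ_lt i, le_rfl⟩, kneserPiece, sub_self, mul_zero, add_zero]
  set n : ℝ → ℕ := fun x ↦ ⌊-Real.logb 2 x⌋₊
  have hn : Tendsto n (𝓝[>] 0) atTop := tendsto_nat_floor_atTop.comp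
    (tendsto_neg_atBot_atTop.comp (Real.tendsto_logb_nhdsGT_zero one_lt_two))
  rw [tendsto_iff_norm_sub_tendsto_zero]
  refine squeeze_zero' (.of_forall fun _ ↦ norm_nonneg _) ?_
    (tendsto_one_div_atTop_nhds_zero_nat.comp hn)
  filter_upwards [Ioo_mem_nhdsGT (rseq_pos 1)] with x ⟨hx0, hx1⟩
  have hL : 1 < -Real.logb 2 x := by
    have := Real.logb_lt_logb one_lt_two hx0 hx1
    rw [logb_rseq, Nat.cast_one] at this
    linarith
  have hnx : 0 < n x := Nat.floor_pos.2 hL.le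
  have hx : x ∈ Ioc (rseq (n x + 1)) (rseq (n x)) :=
    (mem_Ioc_rseq_iff hx0).2 ⟨Nat.floor_le (by linarith), Nat.lt_floor_add_one _⟩
  have hnx' : (0 : ℝ) < n x := by exact_mod_cast hnx
  rw [hpiece _ hnx x hx, Real.norm_eq_abs]
  convert abs_div_sub_one_le (by positivity) (kneserPiece_mem_Icc hnx hx)
    (div_abs_log_mem_Icc hnx hx) using 1
  simp only [Function.comp_apply]
  field_simp
  ring
end
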